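/- Define F(n,k) = (-1)^n [3n-2k+1] · binom_q(2n-2k,n) · (q;q^2)_n (q;q^2)_{n-k} / ((q;q)_n (q^2;q^2)_{n-k}) and G(n,k) = (-1)^{n+1} [n] · binom_q(2n-2k,n-1) · (q;q^2)_n (q;q^2)_{n-k} · q^{n+1-2k} / ((q;q)_n (q^2;q^2)_{n-k}), where binom_q(M,N) = 0 if N < 0 or N > M. Then for all integers n ≥ 0 and k ≥ 1 with n ≥ k, F(n,k-1) - F(n,k) = G(n+1,k) - G(n,k). -/

import Mathlib

open Polynomial Finset

noncomputable def q : RatFunc ℚ := RatFunc.X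

/-- `qpoch a b m = (a;b)_m = ∏_{j=0}^{m-1} (1 - a b^j)`. -/
noncomputable def qpoch (a b : RatFunc ℚ) (m : ℕ) : RatFunc ℚ :=
  ∏ j ∈ Finset.range m, (1 - a * b ^ j)

/-- The q-integer `[m] = (1-q^m)/(1-q)` for any integer `m`. -/
noncomputable def qint (m : ℤ) : RatFunc ℚ := (1 - q ^ m) / (1 - q)

/-- Gaussian binomial coefficient in base `b`. -/
noncomputable def qbin (b : RatFunc ℚ) (M N : ℕ) : RatFunc ℚ :=
  if N ≤ M then qpoch b b M / (qpoch b b N * qpoch b b (M - N)) else 0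

/-- `C2 a = a(a-1)/2`. -/
def C2 (a : ℤ) : ℤ := a * (a - 1) / 2

/-- The polynomial `[n] = 1 + q + ... + q^{n-1}` in `ℚ[q]`. -/
noncomputable def qnPoly (n : ℕ) : Polynomial ℚ := ∑ i ∈ Finset.range n, X ^ i

/-- Congruence of rational functions modulo a polynomial: the reduced numerator of the
difference is divisible by `P` and the reduced denominator is coprime to `P`. -/
def congrMod (x y : RatFunc ℚ) (P : Polynomial ℚ) : Prop :=
  P ∣ (x - y).num ∧ IsCoprime ((x - y).denom) P

noncomputable def F15 (n k : ℕ) : RatFunc ℚ :=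
  (-1) ^ n * qint (3 * (n : ℤ) - 2 * k + 1) * qbin q (2 * n - 2 * k) n *
    (qpoch q (q ^ 2) n * qpoch q (q ^ 2) (n - k)) /
    (qpoch q q n * qpoch (q ^ 2) (q ^ 2) (n - k))

noncomputable def G15 (n k : ℕ) : RatFunc ℚ :=
  (-1) ^ (n + 1) * qint (n : ℤ) * qbin q (2 * n - 2 * k) (n - 1) *
    (qpoch q (q ^ 2) n * qpoch q (q ^ 2) (n - k)) * q ^ ((n : ℤ) + 1 - 2 * k) /
    (qpoch q q n * qpoch (q ^ 2) (q ^ 2) (n - k))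

/-!
Since `(q;q)_{2m} = (q;q²)_m (q²;q²)_m`, both `F(n, n-m)` and `G(n+1, n+1-m)` are explicit
products times `1/(q;q)_{2m-n}`, provided `1/(q;q)_N` is read as `0` for `N < 0`: this is exactly
the vanishing of `binom_q(2m,n)` for `n > 2m`, and with this convention
`1/(q;q)_{N-1} = (1-q^N)/(q;q)_N` holds for every integer `N`. Writing `k = j + 1` and
`n = j + m + 1`, the four terms of the identity are multiples of one and the same
`1/(q;q)_{m+1-j}`, and what remains is an identity between rational functions of `q`, `q^j`,
`q^m`, with no case split on the sign of `m + 1 - j`.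
-/

lemma one_sub_q_pow_ne_zero {m : ℕ} (hm : m ≠ 0) : 1 - q ^ m ≠ 0 := by
  rw [sub_ne_zero, ne_comm]
  intro h
  have h' : (algebraMap ℚ[X] (RatFunc ℚ)) (X ^ m) = algebraMap ℚ[X] (RatFunc ℚ) 1 := by
    simpa [q, RatFunc.algebraMap_X] using h
  simpa [hm] using congrArg natDegree (RatFunc.algebraMap_injective ℚ h')

lemma one_sub_q_ne_zero : 1 - q ≠ 0 := by
  simpa using one_sub_q_pow_ne_zero one_ne_zero

lemma qpoch_succ (a b : RatFunc ℚ) (m : ℕ) :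
    qpoch a b (m + 1) = qpoch a b m * (1 - a * b ^ m) :=
  prod_range_succ _ _

lemma qpoch_q_succ (m : ℕ) : qpoch q q (m + 1) = qpoch q q m * (1 - q ^ (m + 1)) := by
  rw [qpoch_succ, ← pow_succ']

lemma qpoch_q_pow_ne_zero {a : ℕ} (ha : a ≠ 0) (b m : ℕ) : qpoch (q ^ a) (q ^ b) m ≠ 0 :=
  prod_ne_zero_iff.mpr fun j _ => by
    rw [← pow_mul, ← pow_add]
    exact one_sub_q_pow_ne_zero (by omega)

lemma qpoch_q_ne_zero (m : ℕ) : qpoch q q m ≠ 0 := by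
  simpa using qpoch_q_pow_ne_zero one_ne_zero 1 m

lemma qpoch_two_mul (b : RatFunc ℚ) (m : ℕ) :
    qpoch b b (2 * m) = qpoch b (b ^ 2) m * qpoch (b ^ 2) (b ^ 2) m := by
  induction m with
  | zero => simp [qpoch]
  | succ m ih =>
    rw [show 2 * (m + 1) = 2 * m + 1 + 1 by ring, qpoch_succ, qpoch_succ, ih, qpoch_succ,
      qpoch_succ]
    ring

lemma qint_natCast (m : ℕ) : qint m = (1 - q ^ m) / (1 - q) := by
  rw [qint, zpow_natCast]

noncomputable def qfactInv (N : ℤ) : RatFunc ℚ :=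
  if 0 ≤ N then (qpoch q q N.toNat)⁻¹ else 0

lemma qfactInv_natCast (N : ℕ) : qfactInv N = (qpoch q q N)⁻¹ := by
  simp [qfactInv]

lemma qfactInv_of_neg {N : ℤ} (hN : N < 0) : qfactInv N = 0 := by
  simp [qfactInv, not_le.mpr hN]

lemma qfactInv_sub_one (N : ℤ) : qfactInv (N - 1) = (1 - q ^ N) * qfactInv N := by
  rcases lt_or_ge N 1 with hN | hN
  · rw [qfactInv_of_neg (by omega)]
    rcases (show N ≤ 0 by omega).lt_or_eq with hN | rfl
    · rw [qfactInv_of_neg hN, mul_zero]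
    · rw [zpow_zero, sub_self, zero_mul]
  · obtain ⟨n, rfl⟩ : ∃ n : ℕ, N = n + 1 := ⟨(N - 1).toNat, by omega⟩
    rw [add_sub_cancel_right, ← Nat.cast_succ, qfactInv_natCast, qfactInv_natCast, zpow_natCast,
      qpoch_q_succ, mul_inv]
    field_simp [one_sub_q_pow_ne_zero n.succ_ne_zero]

lemma qbin_q_eq (M N : ℕ) : qbin q M N = qpoch q q M / qpoch q q N * qfactInv (M - N) := by
  unfold qbin
  split_ifs with h
  · rw [← Nat.cast_sub h, qfactInv_natCast]
    ring
  · rw [qfactInv_of_neg (by omega), mul_zero]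

lemma F15_eq {n k m : ℕ} (h : k + m = n) :
    F15 n k = (-1) ^ n * qint (n + 2 * m + 1 : ℕ) * qpoch q (q ^ 2) m ^ 2 * qpoch q (q ^ 2) n /
      qpoch q q n ^ 2 * qfactInv (2 * m - n) := by
  have hqint : 3 * (n : ℤ) - 2 * k + 1 = (n + 2 * m + 1 : ℕ) := by push_cast; omega
  rw [F15, hqint, show n - k = m by omega, show 2 * n - 2 * k = 2 * m by omega, qbin_q_eq,
    qpoch_two_mul, Nat.cast_mul, Nat.cast_ofNat]
  field_simp [qpoch_q_pow_ne_zero two_ne_zero 2 m, qpoch_q_ne_zero n]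

lemma G15_succ_eq {n k m : ℕ} (h : k + m = n + 1) :
    G15 (n + 1) k = (-1) ^ n * qint (n + 1 : ℕ) * qpoch q (q ^ 2) m ^ 2 * qpoch q (q ^ 2) (n + 1) *
      q ^ (2 * (m : ℤ) - n) / (qpoch q q n * qpoch q q (n + 1)) * qfactInv (2 * m - n) := by
  have hexp : ((n + 1 : ℕ) : ℤ) + 1 - 2 * k = 2 * (m : ℤ) - n := by push_cast; omega
  rw [G15, hexp, show n + 1 - k = m by omega, show 2 * (n + 1) - 2 * k = 2 * m by omega,
    Nat.add_sub_cancel, qbin_q_eq, qpoch_two_mul, Nat.cast_mul, Nat.cast_ofNat]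
  field_simp [qpoch_q_pow_ne_zero two_ne_zero 2 m, qpoch_q_ne_zero n]
  ring

theorem q_wz_pair_two (n k : ℕ) (hk : 1 ≤ k) (hkn : k ≤ n) :
    F15 n (k - 1) - F15 n k = G15 (n + 1) k - G15 n k := by
  obtain ⟨j, rfl⟩ : ∃ j, k = j + 1 := ⟨k - 1, by omega⟩
  obtain ⟨m, rfl⟩ : ∃ m, n = j + m + 1 := ⟨n - j - 1, by omega⟩
  rw [Nat.add_sub_cancel, F15_eq (m := m + 1) (by ring), F15_eq (m := m) (by ring),
    G15_succ_eq (m := m + 1) (by ring), G15_succ_eq (n := j + m) (m := m) (by ring)]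
  have hexp₀ : 2 * ((m + 1 : ℕ) : ℤ) - ((j + m + 1 : ℕ) : ℤ) = (m + 1 : ℕ) - j := by
    push_cast; ring
  have hexp₁ : 2 * (m : ℤ) - ((j + m : ℕ) : ℤ) = (m + 1 : ℕ) - j - 1 := by
    push_cast; ring
  have hexp₂ : 2 * (m : ℤ) - ((j + m + 1 : ℕ) : ℤ) = (m + 1 : ℕ) - j - 1 - 1 := by
    push_cast; ring
  have hq : q ≠ 0 := RatFunc.X_ne_zero
  rw [hexp₀, hexp₁, hexp₂, qfactInv_sub_one, qfactInv_sub_one, zpow_sub_one₀ hq, zpow_sub₀ hq,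
    zpow_natCast, zpow_natCast]
  simp only [qint_natCast, qpoch_q_succ]
  simp only [qpoch_succ]
  field_simp [qpoch_q_ne_zero, one_sub_q_ne_zero, one_sub_q_pow_ne_zero]
  ring
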